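/- arXiv:2407.07190 — 4 statements merged into one kernel-verified Lean document; each statement's English description precedes it below -/
import Mathlib

section
/- Let a, b, c, d, e, f be six pairwise distinct integers. Define the parity of a triple (x, y, z) of distinct integers as the parity (element of ℤ/2) of the number of inversions among its entries, i.e., the number of pairs of positions i < j whose entries satisfy (entry at i) > (entry at j), taken mod 2. Then there exist x ∈ {a, b, c} and y ∈ {d, e, f} such that exchanging x and y between the two triples (keeping all other entries in place) flips the parity of both the triple (a, b, c) and the triple (d, e, f). -/
/-!
Replacing the entry `x` of a triple of distinct integers by a new value `w` changes the
number of inversions, mod 2, by the number of other entries lying strictly between `x` and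
`w`. Hence exchanging `x ∈ A = {a, b, c}` with `y ∈ B = {d, e, f}` flips both parities
exactly when an odd number of elements of `A` and an odd number of elements of `B` lie
strictly between `x` and `y`, e.g. one of each. Such a pair exists: listing the six numbers
in increasing order, some two of them three places apart come from different triples and
have one element of each triple between them. Only the relative order matters here, so
this is a check over the twenty three-element subsets `A` of `Fin 6`.
-/

/-- The parity (in ℤ/2) of the number of inversions of a triple of integers,
i.e. the number of pairs of positions `i < j` whose entries satisfy
(entry at `i`) > (entry at `j`), taken mod 2. -/
def tripleParity (t : Fin 3 → ℤ) : ZMod 2 :=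
  ((Finset.univ.filter fun p : Fin 3 × Fin 3 => p.1 < p.2 ∧ t p.2 < t p.1).card : ZMod 2)

open Finset Function

section LinearOrder

variable {α : Type*} [LinearOrder α]

instance Set.decidableMemUIoo (a b x : α) : Decidable (x ∈ Set.uIoo a b) :=
  inferInstanceAs (Decidable (a ⊓ b < x ∧ x < a ⊔ b))

lemma ite_lt_right_eq_add_ite_mem_uIoo {x y z : α} (hx : z ≠ x) (hy : z ≠ y) :
    (if z < y then (1 : ZMod 2) else 0) =
      (if z < x then 1 else 0) + if z ∈ Set.uIoo x y then 1 else 0 := by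
  simp only [Set.uIoo, Set.mem_Ioo, min_lt_iff, lt_max_iff]
  rcases hx.lt_or_gt with hx | hx <;> rcases hy.lt_or_gt with hy | hy <;>
    simp [hx, hy, hx.not_gt, hy.not_gt, CharTwo.add_self_eq_zero]

lemma ite_lt_left_eq_add_ite_mem_uIoo {x y z : α} (hx : z ≠ x) (hy : z ≠ y) :
    (if y < z then (1 : ZMod 2) else 0) =
      (if x < z then 1 else 0) + if z ∈ Set.uIoo x y then 1 else 0 := by
  simp only [Set.uIoo, Set.mem_Ioo, min_lt_iff, lt_max_iff]
  rcases hx.lt_or_gt with hx | hx <;> rcases hy.lt_or_gt with hy | hy <;>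
    simp [hx, hy, hx.not_gt, hy.not_gt, CharTwo.add_self_eq_zero]

lemma OrderEmbedding.mem_uIoo_iff {β : Type*} [LinearOrder β] (g : α ↪o β) {a b x : α} :
    g x ∈ Set.uIoo (g a) (g b) ↔ x ∈ Set.uIoo a b := by
  simp only [Set.uIoo, Set.mem_Ioo, ← g.monotone.map_min, ← g.monotone.map_max, g.lt_iff_lt]

lemma Finset.card_filter_mem_uIoo_map {β : Type*} [LinearOrder β] (g : α ↪o β)
    (C : Finset α) (x y : α) :
    #{z ∈ C.map g.toEmbedding | z ∈ Set.uIoo (g x) (g y)} = #{z ∈ C | z ∈ Set.uIoo x y} := by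
  rw [filter_map, card_map]
  congr 1
  ext z
  simp [g.mem_uIoo_iff]

lemma Finset.map_filter_mem_orderEmbOfFin {S C : Finset α} {k : ℕ} (h : #S = k) (hC : C ⊆ S) :
    ({m | S.orderEmbOfFin h m ∈ C} : Finset (Fin k)).map (S.orderEmbOfFin h).toEmbedding = C := by
  ext z
  simp only [mem_map, mem_filter, mem_univ, true_and, RelEmbedding.coe_toEmbedding]
  constructor
  · rintro ⟨m, hm, rfl⟩
    exact hm
  · intro hz
    obtain ⟨m, rfl⟩ : z ∈ Set.range (S.orderEmbOfFin h) := by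
      rw [range_orderEmbOfFin]
      exact hC hz
    exact ⟨m, hz, rfl⟩

theorem Finset.exists_card_filter_mem_uIoo_eq_one_of_fin_six (A : Finset (Fin 6)) (hA : #A = 3) :
    ∃ x ∈ A, ∃ y ∉ A,
      #{z ∈ A | z ∈ Set.uIoo x y} = 1 ∧ #{z ∈ Aᶜ | z ∈ Set.uIoo x y} = 1 := by
  revert A
  decide

theorem Finset.exists_card_filter_mem_uIoo_eq_one {A B : Finset α} (hAB : Disjoint A B)
    (hA : #A = 3) (hB : #B = 3) :
    ∃ x ∈ A, ∃ y ∈ B,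
      #{z ∈ A | z ∈ Set.uIoo x y} = 1 ∧ #{z ∈ B | z ∈ Set.uIoo x y} = 1 := by
  have hS : #(A ∪ B) = 6 := by rw [card_union_of_disjoint hAB, hA, hB]
  set g := (A ∪ B).orderEmbOfFin hS
  set A' : Finset (Fin 6) := {m | g m ∈ A}
  have hA'map : A'.map g.toEmbedding = A := map_filter_mem_orderEmbOfFin hS subset_union_left
  have hB'map : A'ᶜ.map g.toEmbedding = B := by
    have hcompl : A'ᶜ = ({m | g m ∈ B} : Finset (Fin 6)) := by
      ext m
      have hm := (A ∪ B).orderEmbOfFin_mem hS m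
      have := @disjoint_left.1 hAB (g m)
      simp only [A', mem_compl, mem_filter, mem_univ, true_and, mem_union] at hm ⊢
      tauto
    rw [hcompl]
    exact map_filter_mem_orderEmbOfFin hS subset_union_right
  obtain ⟨x, hx, y, hy, hxy⟩ := exists_card_filter_mem_uIoo_eq_one_of_fin_six A'
    (by rw [← card_map g.toEmbedding, hA'map, hA])
  refine ⟨g x, ?_, g y, ?_, ?_⟩
  · rw [← hA'map]
    exact mem_map_of_mem _ hx
  · rw [← hB'map]
    exact mem_map_of_mem _ (mem_compl.2 hy)
  · rwa [← hA'map, ← hB'map, card_filter_mem_uIoo_map, card_filter_mem_uIoo_map]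

end LinearOrder

lemma Finset.sum_ite_mem_eq_card_filter_image {ι α R : Type*} [Fintype ι] [DecidableEq α]
    [AddCommMonoidWithOne R] {t : ι → α} (ht : Injective t) (s : Set α) [DecidablePred (· ∈ s)] :
    (∑ j, if t j ∈ s then (1 : R) else 0) = #{z ∈ univ.image t | z ∈ s} := by
  rw [sum_boole, filter_image, card_image_of_injective _ ht]

lemma tripleParity_eq (x y z : ℤ) :
    tripleParity ![x, y, z] =
      (if y < x then 1 else 0) + (if z < x then 1 else 0) + if z < y then 1 else 0 := by
  simp only [tripleParity, card_filter, Fintype.sum_prod_type, Fin.sum_univ_three]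
  simp [Fin.lt_def]

lemma tripleParity_update {t : Fin 3 → ℤ} (ht : Injective t) (i : Fin 3) {w : ℤ}
    (hw : w ∉ Set.range t) :
    tripleParity (update t i w) =
      tripleParity t + ∑ j, if t j ∈ Set.uIoo (t i) w then 1 else 0 := by
  obtain ⟨x, y, z, rfl⟩ : ∃ x y z, t = ![x, y, z] :=
    ⟨t 0, t 1, t 2, by ext j; fin_cases j <;> rfl⟩
  have hxy : x ≠ y := ht.ne (by decide : (0 : Fin 3) ≠ 1)
  have hxz : x ≠ z := ht.ne (by decide : (0 : Fin 3) ≠ 2)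
  have hyz : y ≠ z := ht.ne (by decide : (1 : Fin 3) ≠ 2)
  have hxw : x ≠ w := fun h => hw ⟨0, h⟩
  have hyw : y ≠ w := fun h => hw ⟨1, h⟩
  have hzw : z ≠ w := fun h => hw ⟨2, h⟩
  obtain rfl | rfl | rfl : i = 0 ∨ i = 1 ∨ i = 2 := by fin_cases i <;> simp
  · rw [show update ![x, y, z] 0 w = ![w, y, z] by ext j; fin_cases j <;> rfl]
    simp only [tripleParity_eq, Fin.sum_univ_three, Matrix.cons_val, Set.left_notMem_uIoo,
      if_false]
    have := ite_lt_right_eq_add_ite_mem_uIoo hxy.symm hyw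
    have := ite_lt_right_eq_add_ite_mem_uIoo hxz.symm hzw
    grind
  · rw [show update ![x, y, z] 1 w = ![x, w, z] by ext j; fin_cases j <;> rfl]
    simp only [tripleParity_eq, Fin.sum_univ_three, Matrix.cons_val, Set.left_notMem_uIoo,
      if_false]
    have := ite_lt_left_eq_add_ite_mem_uIoo hxy hxw
    have := ite_lt_right_eq_add_ite_mem_uIoo hyz.symm hzw
    grind
  · rw [show update ![x, y, z] 2 w = ![x, y, w] by ext j; fin_cases j <;> rfl]
    simp only [tripleParity_eq, Fin.sum_univ_three, Matrix.cons_val, Set.left_notMem_uIoo,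
      if_false]
    have := ite_lt_left_eq_add_ite_mem_uIoo hxz hxw
    have := ite_lt_left_eq_add_ite_mem_uIoo hyz hyw
    grind

theorem exists_tripleParity_update_swap_eq_add_one {t u : Fin 3 → ℤ} (ht : Injective t)
    (hu : Injective u) (htu : ∀ i j, t i ≠ u j) :
    ∃ i j, tripleParity (update t i (u j)) = tripleParity t + 1 ∧
      tripleParity (update u j (t i)) = tripleParity u + 1 := by
  have hdisj : Disjoint (univ.image t) (univ.image u) := by
    simp only [disjoint_left, mem_image, mem_univ, true_and]
    rintro _ ⟨i, rfl⟩ ⟨j, hj⟩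
    exact htu i j hj.symm
  obtain ⟨_, hx, _, hy, hA, hB⟩ := exists_card_filter_mem_uIoo_eq_one hdisj
    (by rw [card_image_of_injective _ ht, card_fin]) (by rw [card_image_of_injective _ hu, card_fin])
  obtain ⟨i, -, rfl⟩ := mem_image.1 hx
  obtain ⟨j, -, rfl⟩ := mem_image.1 hy
  refine ⟨i, j, ?_, ?_⟩
  · rw [tripleParity_update ht i fun ⟨k, hk⟩ => htu k j hk,
      sum_ite_mem_eq_card_filter_image ht, hA, Nat.cast_one]
  · rw [tripleParity_update hu j fun ⟨k, hk⟩ => htu i k hk.symm,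
      sum_ite_mem_eq_card_filter_image hu]
    simp only [Set.uIoo_comm (u j), hB, Nat.cast_one]

/-- Given six pairwise distinct integers arranged in two ordered triples
`(a, b, c)` and `(d, e, f)`, one can exchange one entry of the first triple with
one entry of the second triple (keeping all other entries in place) so that the
parities of both triples are flipped. -/
theorem exists_swap_flipping_both_parities (a b c d e f : ℤ)
    (hdist : ([a, b, c, d, e, f] : List ℤ).Pairwise (· ≠ ·)) :
    ∃ i j : Fin 3,
      tripleParity (Function.update ![a, b, c] i (![d, e, f] j)) =
        tripleParity ![a, b, c] + 1 ∧
      tripleParity (Function.update ![d, e, f] j (![a, b, c] i)) =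
        tripleParity ![d, e, f] + 1 := by
  obtain ⟨habc, hdef, hdisj⟩ := List.nodup_append.1
    (show (List.ofFn ![a, b, c] ++ List.ofFn ![d, e, f]).Nodup from hdist)
  exact exists_tripleParity_update_swap_eq_add_one (List.nodup_ofFn.1 habc)
    (List.nodup_ofFn.1 hdef) fun i j =>
      hdisj _ (List.mem_ofFn.2 ⟨i, rfl⟩) _ (List.mem_ofFn.2 ⟨j, rfl⟩)
end

section
/- For every positive integer r, with d = ⌊r/3⌋, there exists a function g₀ : Perm(Fin r) → (Fin d → Bool) such that: for every permutation π ∈ Perm(Fin r) and all indices i₀, i₁ ∈ Fin d, there exist j₀, j₁ ∈ Fin r such that g₀(π ∘ swap(j₀, j₁)) equals g₀(π) XOR e_{i₀} XOR e_{i₁}, where e_i denotes the Boolean vector that is true only in coordinate i and swap(j₀, j₁) is the permutation exchanging j₀ and j₁ (the identity if j₀ = j₁). In other words, any two prescribed bits of the output (or no bits, when i₀ = i₁) can be flipped, and no others, by composing the input permutation with a single transposition. -/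
set_option maxRecDepth 100000
set_option maxHeartbeats 4000000
set_option synthInstance.maxHeartbeats 2000000
set_option synthInstance.maxSize 2000

def sg {α : Type*} [LinearOrder α] (a b c : α) : Bool :=
  xor (decide (a < b)) (xor (decide (a < c)) (decide (b < c)))

def sgnF {α : Type*} [LinearOrder α] (f : Fin 3 → α) : Bool := sg (f 0) (f 1) (f 2)

lemma key6 : ∀ a b c a' b' c' : Fin 6,
    a ≠ b → a ≠ c → b ≠ c → a' ≠ b' → a' ≠ c' → b' ≠ c' →
    a ≠ a' → a ≠ b' → a ≠ c' → b ≠ a' → b ≠ b' → b ≠ c' → c ≠ a' → c ≠ b' → c ≠ c' →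
    (sg a' b c = !sg a b c ∧ sg a b' c' = !sg a' b' c') ∨
    (sg b' b c = !sg a b c ∧ sg a' a c' = !sg a' b' c') ∨
    (sg c' b c = !sg a b c ∧ sg a' b' a = !sg a' b' c') ∨
    (sg a a' c = !sg a b c ∧ sg b b' c' = !sg a' b' c') ∨
    (sg a b' c = !sg a b c ∧ sg a' b c' = !sg a' b' c') ∨
    (sg a c' c = !sg a b c ∧ sg a' b' b = !sg a' b' c') ∨
    (sg a b a' = !sg a b c ∧ sg c b' c' = !sg a' b' c') ∨
    (sg a b b' = !sg a b c ∧ sg a' c c' = !sg a' b' c') ∨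
    (sg a b c' = !sg a b c ∧ sg a' b' c = !sg a' b' c') := by decide

lemma key (v w : Fin 3 → Fin 6)
    (hvw : ∀ k l, v k ≠ w l)
    (hv : ∀ k l : Fin 3, k ≠ l → v k ≠ v l)
    (hw : ∀ k l : Fin 3, k ≠ l → w k ≠ w l) :
    ∃ i j : Fin 3,
      sgnF (Function.update v i (w j)) = !sgnF v ∧
      sgnF (Function.update w j (v i)) = !sgnF w := by
  have H := key6 (v 0) (v 1) (v 2) (w 0) (w 1) (w 2)
    (hv 0 1 (by decide)) (hv 0 2 (by decide)) (hv 1 2 (by decide))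
    (hw 0 1 (by decide)) (hw 0 2 (by decide)) (hw 1 2 (by decide))
    (hvw 0 0) (hvw 0 1) (hvw 0 2) (hvw 1 0) (hvw 1 1) (hvw 1 2)
    (hvw 2 0) (hvw 2 1) (hvw 2 2)
  rcases H with h|h|h|h|h|h|h|h|h
  · exact ⟨0, 0, by simpa [sgnF, Function.update] using h.1,
      by simpa [sgnF, Function.update] using h.2⟩
  · exact ⟨0, 1, by simpa [sgnF, Function.update] using h.1,
      by simpa [sgnF, Function.update] using h.2⟩
  · exact ⟨0, 2, by simpa [sgnF, Function.update] using h.1,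
      by simpa [sgnF, Function.update] using h.2⟩
  · exact ⟨1, 0, by simpa [sgnF, Function.update] using h.1,
      by simpa [sgnF, Function.update] using h.2⟩
  · exact ⟨1, 1, by simpa [sgnF, Function.update] using h.1,
      by simpa [sgnF, Function.update] using h.2⟩
  · exact ⟨1, 2, by simpa [sgnF, Function.update] using h.1,
      by simpa [sgnF, Function.update] using h.2⟩
  · exact ⟨2, 0, by simpa [sgnF, Function.update] using h.1,
      by simpa [sgnF, Function.update] using h.2⟩
  · exact ⟨2, 1, by simpa [sgnF, Function.update] using h.1,
      by simpa [sgnF, Function.update] using h.2⟩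
  · exact ⟨2, 2, by simpa [sgnF, Function.update] using h.1,
      by simpa [sgnF, Function.update] using h.2⟩

lemma exists_rank {α : Type*} [LinearOrder α] (S : Finset α)
    (hS : S.card ≤ 6) :
    ∃ ρ : α → Fin 6, ∀ a ∈ S, ∀ b ∈ S, (ρ a < ρ b ↔ a < b) := by
  classical
  have hcard : ∀ c ∈ S, (S.filter (· < c)).card ≤ 5 := by
    intro c hc
    have hsub : S.filter (· < c) ⊆ S.erase c := by
      intro x hx
      simp only [Finset.mem_filter] at hx
      exact Finset.mem_erase.mpr ⟨ne_of_lt hx.2, hx.1⟩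
    have h1 := Finset.card_le_card hsub
    have h2 := Finset.card_erase_of_mem hc
    omega
  refine ⟨fun a => ⟨min (S.filter (· < a)).card 5, by omega⟩, ?_⟩
  intro a ha b hb
  rw [Fin.mk_lt_mk, min_eq_left (hcard a ha), min_eq_left (hcard b hb)]
  constructor
  · intro h
    by_contra hab
    push_neg at hab
    have hsub : S.filter (· < b) ⊆ S.filter (· < a) := by
      intro x hx
      simp only [Finset.mem_filter] at hx ⊢
      exact ⟨hx.1, lt_of_lt_of_le hx.2 hab⟩
    exact absurd (Finset.card_le_card hsub) (by omega)
  · intro h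
    apply Finset.card_lt_card
    constructor
    · intro x hx
      simp only [Finset.mem_filter] at hx ⊢
      exact ⟨hx.1, lt_trans hx.2 h⟩
    · intro hsub
      have hmem : a ∈ S.filter (· < b) := Finset.mem_filter.mpr ⟨ha, h⟩
      have := hsub hmem
      simp only [Finset.mem_filter] at this
      exact lt_irrefl a this.2

lemma sgnF_rank {α : Type*} [LinearOrder α] (ρ : α → Fin 6) (f : Fin 3 → α)
    (h : ∀ k l : Fin 3, ρ (f k) < ρ (f l) ↔ f k < f l) :
    sgnF (fun k => ρ (f k)) = sgnF f := by
  unfold sgnF sg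
  rw [decide_eq_decide.mpr (h 0 1), decide_eq_decide.mpr (h 0 2),
    decide_eq_decide.mpr (h 1 2)]

/-- For every positive integer `r`, with `d = ⌊r/3⌋`, there is a function
`g₀ : Perm (Fin r) → (Fin d → Bool)` such that any two prescribed bits of the
output (or no bits, when `i₀ = i₁`) can be flipped, and no others, by composing
the input permutation with a single transposition `swap j₀ j₁` (the identity
when `j₀ = j₁`). -/
theorem exists_parity_encoding (r : ℕ) (hr : 0 < r) :
    ∃ g₀ : Equiv.Perm (Fin r) → (Fin (r / 3) → Bool),
      ∀ (π : Equiv.Perm (Fin r)) (i₀ i₁ : Fin (r / 3)),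
        ∃ j₀ j₁ : Fin r,
          g₀ (π * Equiv.swap j₀ j₁) =
            fun i => xor (xor (g₀ π i) (decide (i = i₀))) (decide (i = i₁)) := by
  have hpos : ∀ (i : Fin (r/3)) (k : Fin 3), 3 * i.val + k.val < r := by
    intro i k
    have h1 := i.isLt
    have h2 := k.isLt
    omega
  set pos : Fin (r/3) → Fin 3 → Fin r := fun i k => ⟨3 * i.val + k.val, hpos i k⟩ with hposdef
  have pos_inj : ∀ (i i' : Fin (r/3)) (k k' : Fin 3), pos i k = pos i' k' → i = i' ∧ k = k' := by
    intro i i' k k' h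
    have := Fin.val_eq_of_eq h
    simp only [hposdef] at this
    have h1 := k.isLt; have h2 := k'.isLt
    exact ⟨Fin.ext (by omega), Fin.ext (by omega)⟩
  refine ⟨fun π i => sgnF (fun k => π (pos i k)), ?_⟩
  intro π i₀ i₁
  by_cases h01 : i₀ = i₁
  · subst h01
    refine ⟨⟨0, hr⟩, ⟨0, hr⟩, ?_⟩
    rw [Equiv.swap_self]
    funext i
    show sgnF (fun k => (π * Equiv.refl (Fin r)) (pos i k)) = _
    have hmul : (π * Equiv.refl (Fin r)) = π := by ext x; rfl
    rw [hmul]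
    cases h : decide (i = i₀) <;> simp [h]
  · -- i₀ ≠ i₁
    have hv : ∀ k l : Fin 3, k ≠ l → π (pos i₀ k) ≠ π (pos i₀ l) := by
      intro k l hkl h
      exact hkl (pos_inj _ _ _ _ (π.injective h)).2
    have hw : ∀ k l : Fin 3, k ≠ l → π (pos i₁ k) ≠ π (pos i₁ l) := by
      intro k l hkl h
      exact hkl (pos_inj _ _ _ _ (π.injective h)).2
    have hdistinct : ∀ k l : Fin 3, π (pos i₀ k) ≠ π (pos i₁ l) := by
      intro k l hkl
      exact h01 (pos_inj _ _ _ _ (π.injective hkl)).1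
    set v : Fin 3 → Fin r := fun k => π (pos i₀ k) with hvdef
    set w : Fin 3 → Fin r := fun k => π (pos i₁ k) with hwdef
    set S : Finset (Fin r) := {v 0, v 1, v 2, w 0, w 1, w 2} with hSdef
    have hScard : S.card ≤ 6 := by
      have c1 := Finset.card_insert_le (v 0) ({v 1, v 2, w 0, w 1, w 2} : Finset (Fin r))
      have c2 := Finset.card_insert_le (v 1) ({v 2, w 0, w 1, w 2} : Finset (Fin r))
      have c3 := Finset.card_insert_le (v 2) ({w 0, w 1, w 2} : Finset (Fin r))
      have c4 := Finset.card_insert_le (w 0) ({w 1, w 2} : Finset (Fin r))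
      have c5 := Finset.card_insert_le (w 1) ({w 2} : Finset (Fin r))
      have c6 : ({w 2} : Finset (Fin r)).card = 1 := Finset.card_singleton _
      show ({v 0, v 1, v 2, w 0, w 1, w 2} : Finset (Fin r)).card ≤ 6
      omega
    obtain ⟨ρ, hρ⟩ := exists_rank S hScard
    have memSv : ∀ k : Fin 3, v k ∈ S := by intro k; fin_cases k <;> simp [hSdef]
    have memSw : ∀ k : Fin 3, w k ∈ S := by intro k; fin_cases k <;> simp [hSdef]
    have hρinj : ∀ a b : Fin r, a ∈ S → b ∈ S → ρ a = ρ b → a = b := by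
      intro a b ha hb hab
      rcases lt_trichotomy a b with h | h | h
      · exact absurd ((hρ a ha b hb).mpr h) (by rw [hab]; exact lt_irrefl _)
      · exact h
      · exact absurd ((hρ b hb a ha).mpr h) (by rw [hab]; exact lt_irrefl _)
    obtain ⟨i, j, hkey1, hkey2⟩ := key (fun k => ρ (v k)) (fun k => ρ (w k))
      (fun k l h => hdistinct k l (hρinj _ _ (memSv k) (memSw l) h))
      (fun k l hkl h => hv k l hkl (hρinj _ _ (memSv k) (memSv l) h))
      (fun k l hkl h => hw k l hkl (hρinj _ _ (memSw k) (memSw l) h))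
    refine ⟨pos i₀ i, pos i₁ j, ?_⟩
    set π' : Equiv.Perm (Fin r) := π * Equiv.swap (pos i₀ i) (pos i₁ j) with hπ'
    have happly : ∀ (c : Fin (r/3)) (k : Fin 3),
        π' (pos c k) = if c = i₀ ∧ k = i then w j else if c = i₁ ∧ k = j then v i
          else π (pos c k) := by
      intro c k
      rw [hπ', Equiv.Perm.mul_apply]
      split_ifs with h1 h2
      · obtain ⟨rfl, rfl⟩ := h1
        rw [Equiv.swap_apply_left]
      · obtain ⟨rfl, rfl⟩ := h2
        rw [Equiv.swap_apply_right]
      · rw [Equiv.swap_apply_of_ne_of_ne]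
        · intro h; exact h1 (pos_inj _ _ _ _ h)
        · intro h; exact h2 (pos_inj _ _ _ _ h)
    show (fun c => sgnF (fun k => π' (pos c k))) = _
    funext c
    show sgnF (fun k => π' (pos c k)) =
      xor (xor (sgnF (fun k => π (pos c k))) (decide (c = i₀))) (decide (c = i₁))
    by_cases hc0 : c = i₀
    · rw [hc0]
      have heq : (fun k => π' (pos i₀ k)) = Function.update v i (w j) := by
        funext k
        rw [happly]
        by_cases hk : k = i
        · subst hk
          rw [if_pos ⟨rfl, rfl⟩, Function.update_self]
        · rw [if_neg (fun h => hk h.2), if_neg (fun h => h01 h.1),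
            Function.update_of_ne hk]
      rw [heq]
      have hupd : ∀ k l : Fin 3,
          ρ (Function.update v i (w j) k) < ρ (Function.update v i (w j) l) ↔
          Function.update v i (w j) k < Function.update v i (w j) l := by
        intro k l
        apply hρ
        · by_cases hk : k = i
          · subst hk; rw [Function.update_self]; exact memSw j
          · rw [Function.update_of_ne hk]; exact memSv k
        · by_cases hl : l = i
          · subst hl; rw [Function.update_self]; exact memSw j
          · rw [Function.update_of_ne hl]; exact memSv l
      have hcomp : (fun k => ρ (Function.update v i (w j) k)) =
          Function.update (fun k => ρ (v k)) i (ρ (w j)) := by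
        funext k
        by_cases hk : k = i
        · subst hk; rw [Function.update_self, Function.update_self]
        · rw [Function.update_of_ne hk, Function.update_of_ne hk]
      have hv2 : sgnF (fun k => ρ (v k)) = sgnF v :=
        sgnF_rank ρ v (fun k l => hρ _ (memSv k) _ (memSv l))
      have : sgnF (Function.update v i (w j)) = !sgnF v := by
        rw [← sgnF_rank ρ (Function.update v i (w j)) hupd, hcomp, hkey1, hv2]
      rw [this, hvdef]
      simp [h01]
    · by_cases hc1 : c = i₁
      · rw [hc1]
        have heq : (fun k => π' (pos i₁ k)) = Function.update w j (v i) := by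
          funext k
          rw [happly]
          by_cases hk : k = j
          · subst hk
            rw [if_neg (fun h => h01 h.1.symm), if_pos ⟨rfl, rfl⟩, Function.update_self]
          · rw [if_neg (fun h => h01 h.1.symm), if_neg (fun h => hk h.2),
              Function.update_of_ne hk]
        rw [heq]
        have hupd : ∀ k l : Fin 3,
            ρ (Function.update w j (v i) k) < ρ (Function.update w j (v i) l) ↔
            Function.update w j (v i) k < Function.update w j (v i) l := by
          intro k l
          apply hρ
          · by_cases hk : k = j
            · subst hk; rw [Function.update_self]; exact memSv i
            · rw [Function.update_of_ne hk]; exact memSw k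
          · by_cases hl : l = j
            · subst hl; rw [Function.update_self]; exact memSv i
            · rw [Function.update_of_ne hl]; exact memSw l
        have hcomp : (fun k => ρ (Function.update w j (v i) k)) =
            Function.update (fun k => ρ (w k)) j (ρ (v i)) := by
          funext k
          by_cases hk : k = j
          · subst hk; rw [Function.update_self, Function.update_self]
          · rw [Function.update_of_ne hk, Function.update_of_ne hk]
        have hw2 : sgnF (fun k => ρ (w k)) = sgnF w :=
          sgnF_rank ρ w (fun k l => hρ _ (memSw k) _ (memSw l))
        have : sgnF (Function.update w j (v i)) = !sgnF w := by
          rw [← sgnF_rank ρ (Function.update w j (v i)) hupd, hcomp, hkey2, hw2]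
        rw [this, hwdef]
        simp [Ne.symm h01]
      · have heq : (fun k => π' (pos c k)) = fun k => π (pos c k) := by
          funext k
          rw [happly, if_neg (fun h => hc0 h.1), if_neg (fun h => hc1 h.1)]
        rw [heq]
        simp [hc0, hc1]
end

section
/- For every integer d ≥ 2 there exist a natural number m with m > d²/16 and a function g₁ : (Fin d → Bool) → Fin m such that: for every vector v : Fin d → Bool and every target m₀ ∈ Fin m, there exist indices i₀, i₁ ∈ Fin d with g₁(v XOR e_{i₀} XOR e_{i₁}) = m₀. That is, any output value of g₁ can be forced by flipping (at most) two bits of the input vector. -/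
/-!
Let `W` be a finite group of exponent two and read the bits of `v` at positions `f x` (`x : W`)
as the syndrome `∑ x, [v (f x)] • x`. Flipping the bit at position `f x₀` adds `x₀` to the
syndrome, whether the bit was set or not, so every value of the syndrome is reached by one flip.
Two disjoint blocks of `k = 2ᵘ` positions, with `2k ≤ d < 4k`, give a pair of syndromes, i.e.
`k² > d² / 16` values, each reachable by two flips.
-/

open Finset Function

variable {ι W β γ : Type*} [DecidableEq ι]

def flipAt (v : ι → Bool) (j : ι) : ι → Bool :=
  fun i => xor (v i) (decide (i = j))

@[simp]
lemma flipAt_apply_self (v : ι → Bool) (j : ι) : flipAt v j j = !v j := by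
  simp [flipAt]

lemma flipAt_apply_of_ne (v : ι → Bool) {i j : ι} (h : i ≠ j) : flipAt v j i = v i := by
  simp [flipAt, h]

def IsTwoFlipSurjective (g : (ι → Bool) → β) : Prop :=
  ∀ v b, ∃ i₀ i₁, g (flipAt (flipAt v i₀) i₁) = b

lemma IsTwoFlipSurjective.comp {g : (ι → Bool) → β} (hg : IsTwoFlipSurjective g)
    {φ : β → γ} (hφ : Surjective φ) : IsTwoFlipSurjective (φ ∘ g) := by
  intro v c
  obtain ⟨b, rfl⟩ := hφ c
  obtain ⟨i₀, i₁, h⟩ := hg v b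
  exact ⟨i₀, i₁, congrArg φ h⟩

section Syndrome

variable [AddCommGroup W] [Fintype W]

def syndrome (f : W → ι) (v : ι → Bool) : W :=
  ∑ x, if v (f x) then x else 0

lemma syndrome_flipAt_of_notMem_range {f : W → ι} {j : ι} (hj : j ∉ Set.range f)
    (v : ι → Bool) : syndrome f (flipAt v j) = syndrome f v := by
  refine sum_congr rfl fun x _ => ?_
  rw [flipAt_apply_of_ne v fun h => hj ⟨x, h⟩]

lemma syndrome_flipAt_apply [DecidableEq W] (hW : ∀ x : W, x + x = 0) {f : W → ι}
    (hf : Injective f) (v : ι → Bool) (x₀ : W) :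
    syndrome f (flipAt v (f x₀)) = syndrome f v + x₀ := by
  have summand : ∀ x, (if flipAt v (f x₀) (f x) then x else 0)
      = (if v (f x) then x else 0) + if x = x₀ then x else 0 := by
    intro x
    by_cases hx : x = x₀
    · subst hx
      rw [flipAt_apply_self]
      cases v (f x) <;> simp [hW]
    · rw [flipAt_apply_of_ne v (hf.ne hx), if_neg hx, add_zero]
  simp only [syndrome, summand, sum_add_distrib, sum_ite_eq', mem_univ, if_true]

def pairSyndrome (e : W ⊕ W ↪ ι) (v : ι → Bool) : W × W :=
  (syndrome (e ∘ Sum.inl) v, syndrome (e ∘ Sum.inr) v)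

lemma pairSyndrome_isTwoFlipSurjective [DecidableEq W] (hW : ∀ x : W, x + x = 0)
    (e : W ⊕ W ↪ ι) : IsTwoFlipSurjective (pairSyndrome e) := by
  have hl : Injective (e ∘ Sum.inl) := e.injective.comp Sum.inl_injective
  have hr : Injective (e ∘ Sum.inr) := e.injective.comp Sum.inr_injective
  have hlr : ∀ x, (e ∘ Sum.inl) x ∉ Set.range (e ∘ Sum.inr) := by
    rintro x ⟨z, hz⟩
    exact Sum.inr_ne_inl (e.injective hz)
  have hrl : ∀ y, (e ∘ Sum.inr) y ∉ Set.range (e ∘ Sum.inl) := by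
    rintro y ⟨z, hz⟩
    exact Sum.inl_ne_inr (e.injective hz)
  intro v ⟨a, b⟩
  set x := a - syndrome (e ∘ Sum.inl) v
  set y := b - syndrome (e ∘ Sum.inr) v
  refine ⟨(e ∘ Sum.inl) x, (e ∘ Sum.inr) y, Prod.ext ?_ ?_⟩
  · change syndrome _ _ = a
    rw [syndrome_flipAt_of_notMem_range (hrl y), syndrome_flipAt_apply hW hl, add_sub_cancel]
  · change syndrome _ _ = b
    rw [syndrome_flipAt_apply hW hr, syndrome_flipAt_of_notMem_range (hlr x), add_sub_cancel]

end Syndrome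

lemma exists_two_pow_bracket {d : ℕ} (hd : 2 ≤ d) : ∃ u : ℕ, 2 * 2 ^ u ≤ d ∧ d < 4 * 2 ^ u := by
  obtain ⟨n, hn⟩ : ∃ n, Nat.log 2 d = n + 1 :=
    Nat.exists_eq_add_one.mpr (Nat.log_pos (by norm_num) hd)
  have hlow := Nat.pow_log_le_self 2 (by omega : d ≠ 0)
  have hhigh := Nat.lt_pow_succ_log_self (by norm_num : 1 < 2) d
  rw [hn, pow_succ] at hlow hhigh
  exact ⟨n, by linarith, by rw [pow_succ] at hhigh; linarith⟩

/-- For every integer `d ≥ 2` there exist `m > d²/16` and a function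
`g₁ : (Fin d → Bool) → Fin m` such that any output value of `g₁` can be forced
by flipping (at most) two bits of the input vector. -/
theorem exists_two_flip_encoding (d : ℕ) (hd : 2 ≤ d) :
    ∃ m : ℕ, (d : ℝ) ^ 2 / 16 < (m : ℝ) ∧
      ∃ g₁ : (Fin d → Bool) → Fin m,
        ∀ (v : Fin d → Bool) (m₀ : Fin m),
          ∃ i₀ i₁ : Fin d,
            g₁ (fun i => xor (xor (v i) (decide (i = i₀))) (decide (i = i₁))) = m₀ := by
  obtain ⟨u, hlow, hhigh⟩ := exists_two_pow_bracket hd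
  let W := Fin u → ZMod 2
  have hcard : Fintype.card W = 2 ^ u := by simp [W]
  have hW : ∀ x : W, x + x = 0 := fun x => funext fun i => CharTwo.add_self_eq_zero (x i)
  obtain ⟨e⟩ : Nonempty (W ⊕ W ↪ Fin d) :=
    Embedding.nonempty_of_card_le (by simpa [hcard, two_mul] using hlow)
  let enc : W × W ≃ Fin (2 ^ u * 2 ^ u) := Fintype.equivFinOfCardEq (by simp [hcard])
  refine ⟨2 ^ u * 2 ^ u, ?_, enc ∘ pairSyndrome e,
    (pairSyndrome_isTwoFlipSurjective hW e).comp enc.surjective⟩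
  have : (d : ℝ) < 4 * 2 ^ u := by exact_mod_cast hhigh
  push_cast
  nlinarith
end

section
/- Let α be a finite type with decidable equality, let π be a permutation of α, and let x ≠ y be elements lying in the same cycle of π (i.e., π.SameCycle x y). Then in the permutation σ := swap(x, y) ∘ π, the elements x and y lie in different cycles, and the sum of the lengths of the cycle of σ containing x and the cycle of σ containing y equals the length of the cycle of π containing x. (A transposition between two elements of the same cycle splits that cycle into two cycles whose lengths sum to the original length.) -/
/-- The length of the cycle of the permutation `σ` containing `x`, i.e. the
cardinality of the orbit of `x` under `σ`. -/
noncomputable def orbitSize {α : Type*} (σ : Equiv.Perm α) (x : α) : ℕ :=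
  Set.ncard {z | σ.SameCycle x z}

private lemma orbit_subset_of_forward_closed {α : Type*} [Finite α] (f : Equiv.Perm α)
    (S : Set α) (hS : ∀ z ∈ S, f z ∈ S) {x : α} (hx : x ∈ S) :
    ∀ z, f.SameCycle x z → z ∈ S := by
  have key : ∀ i : ℕ, (f ^ i) x ∈ S := by
    intro i
    induction i with
    | zero => simpa using hx
    | succ n ih => rw [pow_succ']; exact hS _ ih
  intro z hz
  obtain ⟨i, -, hi⟩ := hz.exists_pow_eq'
  rw [← hi]; exact key i

/-- A transposition between two elements `x ≠ y` of the same cycle of a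
permutation `π` splits that cycle into two: in `σ := swap x y * π` the elements
`x` and `y` lie in different cycles, and the lengths of the cycle of `σ`
containing `x` and of the cycle of `σ` containing `y` sum to the length of the
cycle of `π` containing `x`. -/
theorem swap_splits_cycle {α : Type*} [Fintype α] [DecidableEq α]
    (π : Equiv.Perm α) (x y : α) (hxy : x ≠ y) (h : π.SameCycle x y) :
    ¬ (Equiv.swap x y * π).SameCycle x y ∧
      orbitSize (Equiv.swap x y * π) x + orbitSize (Equiv.swap x y * π) y =
        orbitSize π x := by
  set σ : Equiv.Perm α := Equiv.swap x y * π with hσ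
  -- minimal k with π^k x = y
  obtain ⟨n, -, hn⟩ := h.exists_pow_eq'
  have hex : ∃ m : ℕ, (π ^ m) x = y := ⟨n, hn⟩
  set k := Nat.find hex with hkdef
  have hk : (π ^ k) x = y := Nat.find_spec hex
  have hmin : ∀ m < k, (π ^ m) x ≠ y := fun m hm => Nat.find_min hex hm
  have hk0 : 0 < k := by
    rcases Nat.eq_zero_or_pos k with h0 | h0
    · exfalso; rw [h0] at hk; simp at hk; exact hxy hk
    · exact h0
  -- σ^j x = π^j x for j < k
  have claim : ∀ j, j < k → (σ ^ j) x = (π ^ j) x := by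
    intro j
    induction j with
    | zero => simp
    | succ m ih =>
      intro hm
      have hmk : m < k := lt_trans (Nat.lt_succ_self m) hm
      have hne_y : (π ^ (m + 1)) x ≠ y := hmin _ hm
      have hne_x : (π ^ (m + 1)) x ≠ x := by
        intro hfix
        have : (π ^ (k - (m + 1))) x = y := by
          have hsplit : k - (m + 1) + (m + 1) = k := Nat.sub_add_cancel (le_of_lt hm)
          calc (π ^ (k - (m + 1))) x = (π ^ (k - (m + 1))) ((π ^ (m + 1)) x) := by rw [hfix]
            _ = (π ^ (k - (m + 1) + (m + 1))) x := by conv_rhs => rw [pow_add, Equiv.Perm.mul_apply]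
            _ = y := by rw [hsplit, hk]
        exact hmin _ (by omega) this
      calc (σ ^ (m + 1)) x = σ ((σ ^ m) x) := by rw [pow_succ']; rfl
        _ = σ ((π ^ m) x) := by rw [ih hmk]
        _ = Equiv.swap x y (π ((π ^ m) x)) := rfl
        _ = Equiv.swap x y ((π ^ (m + 1)) x) := by rw [pow_succ']; rfl
        _ = (π ^ (m + 1)) x := Equiv.swap_apply_of_ne_of_ne hne_x hne_y
  -- σ^k x = x
  have hσk : (σ ^ k) x = x := by
    have hm : k - 1 + 1 = k := Nat.succ_pred_eq_of_pos hk0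
    have hlt : k - 1 < k := by omega
    calc (σ ^ k) x = (σ ^ (k - 1 + 1)) x := by rw [hm]
      _ = σ ((σ ^ (k - 1)) x) := by rw [pow_succ', Equiv.Perm.mul_apply]
      _ = σ ((π ^ (k - 1)) x) := by rw [claim _ hlt]
      _ = Equiv.swap x y ((π ^ (k - 1 + 1)) x) := by rw [pow_succ']; rfl
      _ = Equiv.swap x y y := by rw [hm, hk]
      _ = x := Equiv.swap_apply_right x y
  -- reduction mod k
  have hred : ∀ i : ℕ, (σ ^ i) x = (σ ^ (i % k)) x := by
    intro i
    have hmulfix : ∀ q : ℕ, (σ ^ (k * q)) x = x := by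
      intro q
      induction q with
      | zero => simp
      | succ m ih =>
        have : k * (m + 1) = k + k * m := by ring
        rw [this, pow_add]
        simp only [Equiv.Perm.mul_apply]
        rw [ih, hσk]
    conv_lhs => rw [← Nat.mod_add_div i k]
    rw [pow_add]
    simp only [Equiv.Perm.mul_apply]
    rw [hmulfix]
  -- part 1: not same cycle
  have hnot : ¬ σ.SameCycle x y := by
    intro hc
    obtain ⟨i, -, hi⟩ := hc.exists_pow_eq'
    rw [hred i] at hi
    rw [claim _ (Nat.mod_lt i hk0)] at hi
    exact hmin _ (Nat.mod_lt i hk0) hi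
  refine ⟨hnot, ?_⟩
  -- orbits
  set Ox : Set α := {z | σ.SameCycle x z} with hOx
  set Oy : Set α := {z | σ.SameCycle y z} with hOy
  set O : Set α := {z | π.SameCycle x z} with hO
  have hπσ : ∀ z, π z = Equiv.swap x y (σ z) := by
    intro z
    simp [hσ, Equiv.Perm.mul_apply, Equiv.swap_apply_self]
  have hOxO : Ox ⊆ O := by
    have hclosed : ∀ z ∈ O, σ z ∈ O := by
      intro z hz
      have hz' : π.SameCycle x (π z) := hz.apply_right
      by_cases h1 : π z = x
      · have : σ z = y := by simp [hσ, Equiv.Perm.mul_apply, h1]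
        rw [hO]; simp only [Set.mem_setOf_eq]; rw [this]; exact h
      · by_cases h2 : π z = y
        · have : σ z = x := by simp [hσ, Equiv.Perm.mul_apply, h2]
          rw [hO]; simp only [Set.mem_setOf_eq]; rw [this]
        · have : σ z = π z := by
            simp [hσ, Equiv.Perm.mul_apply, Equiv.swap_apply_of_ne_of_ne h1 h2]
          rw [hO]; simp only [Set.mem_setOf_eq]; rw [this]; exact hz'
    intro z hz
    exact orbit_subset_of_forward_closed σ O hclosed (by exact Equiv.Perm.SameCycle.refl π x) z hz
  have hOyO : Oy ⊆ O := by
    have hclosed : ∀ z ∈ O, σ z ∈ O := by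
      intro z hz
      have hz' : π.SameCycle x (π z) := hz.apply_right
      by_cases h1 : π z = x
      · have : σ z = y := by simp [hσ, Equiv.Perm.mul_apply, h1]
        rw [hO]; simp only [Set.mem_setOf_eq]; rw [this]; exact h
      · by_cases h2 : π z = y
        · have : σ z = x := by simp [hσ, Equiv.Perm.mul_apply, h2]
          rw [hO]; simp only [Set.mem_setOf_eq]; rw [this]
        · have : σ z = π z := by
            simp [hσ, Equiv.Perm.mul_apply, Equiv.swap_apply_of_ne_of_ne h1 h2]
          rw [hO]; simp only [Set.mem_setOf_eq]; rw [this]; exact hz'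
    intro z hz
    exact orbit_subset_of_forward_closed σ O hclosed (h : y ∈ O) z hz
  have hOsub : O ⊆ Ox ∪ Oy := by
    have hclosed : ∀ z ∈ Ox ∪ Oy, π z ∈ Ox ∪ Oy := by
      intro z hz
      by_cases h1 : σ z = x
      · right
        have : π z = y := by rw [hπσ z, h1, Equiv.swap_apply_left]
        rw [hOy]; simp only [Set.mem_setOf_eq]; rw [this]
      · by_cases h2 : σ z = y
        · left
          have : π z = x := by rw [hπσ z, h2, Equiv.swap_apply_right]
          rw [hOx]; simp only [Set.mem_setOf_eq]; rw [this]
        · have hπz : π z = σ z := by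
            rw [hπσ z, Equiv.swap_apply_of_ne_of_ne h1 h2]
          rcases hz with hz | hz
          · left; rw [hOx]; simp only [Set.mem_setOf_eq]; rw [hπz]
            exact (hz : σ.SameCycle x z).apply_right
          · right; rw [hOy]; simp only [Set.mem_setOf_eq]; rw [hπz]
            exact (hz : σ.SameCycle y z).apply_right
    intro z hz
    exact orbit_subset_of_forward_closed π (Ox ∪ Oy) hclosed
      (Or.inl (Equiv.Perm.SameCycle.refl σ x)) z hz
  have hunion : Ox ∪ Oy = O := Set.Subset.antisymm (Set.union_subset hOxO hOyO) hOsub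
  have hdisj : Disjoint Ox Oy := by
    rw [Set.disjoint_left]
    intro z hzx hzy
    exact hnot ((hzx : σ.SameCycle x z).trans (hzy : σ.SameCycle y z).symm)
  calc Set.ncard Ox + Set.ncard Oy = Set.ncard (Ox ∪ Oy) :=
        (Set.ncard_union_eq hdisj (Set.toFinite _) (Set.toFinite _)).symm
    _ = Set.ncard O := by rw [hunion]
end
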